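/- Let N be the Terenzi norm on ℓ¹ (extended from the recursive definition by continuity). For every nonzero a ∈ ℓ¹, there exists k ∈ ℕ such that N(a) = N(a_1,…,a_k) + Σ_{n=k+1}^∞ (1 - 1/(n+1))|a_n|. -/
import Mathlib


/-- The Terenzi norm of the truncated sequence `(a 1, …, a m)`, defined recursively. -/
noncomputable def terenzi (a : ℕ → ℝ) : ℕ → ℝ
  | 0 => 0
  | 1 => |a 1|
  | (n+2) => (1 - 1/((n:ℝ)+3)) * (|a (n+2)| + terenzi a (n+1))
      + (1/((n:ℝ)+3)) * max (|a (n+2)| / ((n:ℝ)+2)) (terenzi a (n+1))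

lemma terenzi_nonneg (a : ℕ → ℝ) : ∀ n, 0 ≤ terenzi a n := by
  intro n
  induction n using Nat.strong_induction_on with
  | _ n ih =>
    match n with
    | 0 => simp [terenzi]
    | 1 => simp [terenzi]
    | (m+2) =>
      have hT : 0 ≤ terenzi a (m+1) := ih (m+1) (by omega)
      have hx : 0 ≤ |a (m+2)| := abs_nonneg _
      have hm : (0:ℝ) ≤ (m:ℝ) := Nat.cast_nonneg m
      have hs : (0:ℝ) < 1/((m:ℝ)+3) := by positivity
      have hs1 : (0:ℝ) ≤ 1 - 1/((m:ℝ)+3) := by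
        rw [sub_nonneg, div_le_one (by linarith)]; linarith
      have hmax : (0:ℝ) ≤ max (|a (m+2)| / ((m:ℝ)+2)) (terenzi a (m+1)) :=
        le_trans hT (le_max_right _ _)
      show (0:ℝ) ≤ (1 - 1/((m:ℝ)+3)) * (|a (m+2)| + terenzi a (m+1))
          + (1/((m:ℝ)+3)) * max (|a (m+2)| / ((m:ℝ)+2)) (terenzi a (m+1))
      have := mul_nonneg hs1 (by linarith : (0:ℝ) ≤ |a (m+2)| + terenzi a (m+1))
      have := mul_nonneg hs.le hmax
      linarith

lemma terenzi_le_succ (a : ℕ → ℝ) (n : ℕ) : terenzi a n ≤ terenzi a (n+1) := by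
  match n with
  | 0 => simp [terenzi]
  | (m+1) =>
    have hT : 0 ≤ terenzi a (m+1) := terenzi_nonneg a (m+1)
    have hx : 0 ≤ |a (m+2)| := abs_nonneg _
    have hm : (0:ℝ) ≤ (m:ℝ) := Nat.cast_nonneg m
    have hs : (0:ℝ) < 1/((m:ℝ)+3) := by positivity
    have hs1 : (0:ℝ) ≤ 1 - 1/((m:ℝ)+3) := by
      rw [sub_nonneg, div_le_one (by linarith)]; linarith
    have hmax : terenzi a (m+1) ≤ max (|a (m+2)| / ((m:ℝ)+2)) (terenzi a (m+1)) :=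
      le_max_right _ _
    show terenzi a (m+1) ≤ (1 - 1/((m:ℝ)+3)) * (|a (m+2)| + terenzi a (m+1))
        + (1/((m:ℝ)+3)) * max (|a (m+2)| / ((m:ℝ)+2)) (terenzi a (m+1))
    nlinarith [mul_nonneg hs1 hx, mul_nonneg hs.le (sub_nonneg.2 hmax)]

lemma terenzi_mono (a : ℕ → ℝ) : Monotone (terenzi a) :=
  monotone_nat_of_le_succ (terenzi_le_succ a)

lemma terenzi_pos (a : ℕ → ℝ) (n : ℕ) (hn : 1 ≤ n) (h : a n ≠ 0) :
    0 < terenzi a n := by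
  match n with
  | 1 => simpa [terenzi] using abs_pos.2 h
  | (m+2) =>
    have hT : 0 ≤ terenzi a (m+1) := terenzi_nonneg a (m+1)
    have hx : 0 < |a (m+2)| := abs_pos.2 h
    have hm : (0:ℝ) ≤ (m:ℝ) := Nat.cast_nonneg m
    have hs : (0:ℝ) < 1/((m:ℝ)+3) := by positivity
    have hs1 : (0:ℝ) < 1 - 1/((m:ℝ)+3) := by
      rw [sub_pos, div_lt_one (by linarith)]; linarith
    have hmax : (0:ℝ) ≤ max (|a (m+2)| / ((m:ℝ)+2)) (terenzi a (m+1)) :=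
      le_trans hT (le_max_right _ _)
    show (0:ℝ) < (1 - 1/((m:ℝ)+3)) * (|a (m+2)| + terenzi a (m+1))
        + (1/((m:ℝ)+3)) * max (|a (m+2)| / ((m:ℝ)+2)) (terenzi a (m+1))
    nlinarith [mul_pos hs1 (by linarith : (0:ℝ) < |a (m+2)| + terenzi a (m+1)),
      mul_nonneg hs.le hmax]

lemma terenzi_step (a : ℕ → ℝ) (n : ℕ)
    (h : |a (n+2)| / ((n:ℝ)+2) ≤ terenzi a (n+1)) :
    terenzi a (n+2) = terenzi a (n+1) + (1 - 1/((n:ℝ)+3)) * |a (n+2)| := by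
  show (1 - 1/((n:ℝ)+3)) * (|a (n+2)| + terenzi a (n+1))
      + (1/((n:ℝ)+3)) * max (|a (n+2)| / ((n:ℝ)+2)) (terenzi a (n+1)) = _
  rw [max_eq_right h]; ring

theorem terenzi_tail_formula_exists (a : ℕ → ℝ) (L : ℝ)
    (hsum : Summable (fun n => |a n|))
    (hL : Filter.Tendsto (terenzi a) Filter.atTop (nhds L))
    (hne : ∃ n, 1 ≤ n ∧ a n ≠ 0) :
    ∃ k : ℕ, L = terenzi a k +
      ∑' n : ℕ, if k < n then (1 - 1/((n:ℝ)+1)) * |a n| else 0 := by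
  obtain ⟨n₀, hn₀, ha⟩ := hne
  have hcpos : 0 < terenzi a n₀ := terenzi_pos a n₀ hn₀ ha
  -- |a n| is eventually ≤ terenzi a n₀
  have htend : Filter.Tendsto (fun n => |a n|) Filter.atTop (nhds 0) :=
    hsum.tendsto_atTop_zero
  obtain ⟨k₀, hk₀⟩ := Filter.eventually_atTop.1
    (htend.eventually (eventually_le_nhds hcpos))
  set k := max (max k₀ n₀) 1 with hk
  have hk1 : 1 ≤ k := le_max_right _ _
  have hkn₀ : n₀ ≤ k := le_trans (le_max_right _ _) (le_max_left _ _)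
  have hkk₀ : k₀ ≤ k := le_trans (le_max_left _ _) (le_max_left _ _)
  -- the step identity holds from k on
  have hstep : ∀ m, k ≤ m →
      terenzi a (m+1) = terenzi a m + (1 - 1/((m:ℝ)+2)) * |a (m+1)| := by
    intro m hm
    obtain ⟨n, rfl⟩ : ∃ n, m = n + 1 :=
      ⟨m - 1, by omega⟩
    have hcond : |a (n+2)| / ((n:ℝ)+2) ≤ terenzi a (n+1) := by
      have h1 : |a (n+2)| ≤ terenzi a n₀ := hk₀ (n+2) (by omega)
      have h2 : terenzi a n₀ ≤ terenzi a (n+1) := terenzi_mono a (by omega)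
      have h3 : |a (n+2)| / ((n:ℝ)+2) ≤ |a (n+2)| := by
        apply div_le_self (abs_nonneg _)
        have : (0:ℝ) ≤ (n:ℝ) := Nat.cast_nonneg n
        linarith
      linarith
    show terenzi a (n+2) = terenzi a (n+1) + (1 - 1/(((n+1:ℕ):ℝ)+2)) * |a (n+2)|
    rw [terenzi_step a n hcond]
    push_cast
    ring
  -- telescoping
  have htel : ∀ M, k ≤ M → terenzi a M = terenzi a k +
      ∑ n ∈ Finset.Ioc k M, (1 - 1/((n:ℝ)+1)) * |a n| := by
    intro M hM
    induction M, hM using Nat.le_induction with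
    | base => simp
    | succ M hM ih =>
      rw [hstep M hM, ih, Finset.sum_Ioc_succ_top (by omega)]
      push_cast
      ring
  -- the tail summand
  set f : ℕ → ℝ := fun n => if k < n then (1 - 1/((n:ℝ)+1)) * |a n| else 0 with hf
  have hfle : ∀ n, f n ≤ |a n| := by
    intro n
    simp only [hf]
    split
    · apply mul_le_of_le_one_left (abs_nonneg _)
      have h1 : (0:ℝ) < 1/((n:ℝ)+1) := by positivity
      linarith
    · exact abs_nonneg _
  have hfnn : ∀ n, 0 ≤ f n := by
    intro n
    simp only [hf]
    split
    · apply mul_nonneg _ (abs_nonneg _)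
      have h1 : (0:ℝ) ≤ (n:ℝ) := Nat.cast_nonneg n
      have h2 : 1/((n:ℝ)+1) ≤ 1 := by
        rw [div_le_one (by linarith)]; linarith
      linarith
    · exact le_refl 0
  have hfsum : Summable f := Summable.of_nonneg_of_le hfnn hfle hsum
  -- partial sums of f over range (M+1) for M ≥ k
  have hpart : ∀ M, k ≤ M →
      ∑ n ∈ Finset.range (M+1), f n = terenzi a M - terenzi a k := by
    intro M hM
    have hfilter : Finset.filter (fun n => k < n) (Finset.range (M+1)) =
        Finset.Ioc k M := by
      ext x; simp [Nat.lt_succ_iff]; omega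
    rw [show ∑ n ∈ Finset.range (M+1), f n =
        ∑ n ∈ Finset.filter (fun n => k < n) (Finset.range (M+1)),
          (1 - 1/((n:ℝ)+1)) * |a n| from (Finset.sum_filter _ _).symm,
      hfilter, htel M hM]
    ring
  refine ⟨k, ?_⟩
  have h1 : Filter.Tendsto (fun M => terenzi a k + ∑ n ∈ Finset.range (M+1), f n)
      Filter.atTop (nhds (terenzi a k + ∑' n, f n)) :=
    Filter.Tendsto.const_add _
      ((hfsum.hasSum.tendsto_sum_nat).comp (Filter.tendsto_add_atTop_nat 1))
  have h2 : Filter.Tendsto (fun M => terenzi a k + ∑ n ∈ Finset.range (M+1), f n)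
      Filter.atTop (nhds L) := by
    apply hL.congr'
    filter_upwards [Filter.eventually_ge_atTop k] with M hM
    rw [hpart M hM]; ring
  exact tendsto_nhds_unique h2 h1
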